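/- Let p be an odd prime, G = GL₂(𝔽_p), N = C ∪ ωC the normalizer of the diagonal torus C, and σ_{−1} = [[1,1],[1,−1]]. For a non-scalar g ∈ G with trace t and determinant n, the number of elements of σ_{−1}N conjugate to g equals 2(1 + ((t² − 2n)/p)), where (·/p) is the Legendre symbol (with (0/p) = 0). -/

import Mathlib

open Matrix Pointwise
open scoped Classical

noncomputable section

abbrev GL2 (p : ℕ) := GL (Fin 2) (ZMod p)

namespace Chen

variable (p : ℕ)

/-- The Borel subgroup of upper triangular matrices in `GL₂(𝔽_p)`. -/
def Bor : Subgroup (GL2 p) where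
  carrier := {g | (g : Matrix (Fin 2) (Fin 2) (ZMod p)) 1 0 = 0}
  one_mem' := by
    show ((1 : GL2 p) : Matrix (Fin 2) (Fin 2) (ZMod p)) 1 0 = 0
    simp [Matrix.one_apply]
  mul_mem' := by
    intro a b ha hb
    show ((a * b : GL2 p) : Matrix (Fin 2) (Fin 2) (ZMod p)) 1 0 = 0
    simp only [Set.mem_setOf_eq] at ha hb
    rw [Units.val_mul, Matrix.mul_apply, Fin.sum_univ_two, ha, hb]
    ring
  inv_mem' := by
    intro a ha
    show ((a⁻¹ : GL2 p) : Matrix (Fin 2) (Fin 2) (ZMod p)) 1 0 = 0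
    simp only [Set.mem_setOf_eq] at ha
    rw [Matrix.coe_units_inv, Matrix.inv_def]
    simp [Matrix.adjugate_fin_two, ha]

/-- The split (diagonal) Cartan subgroup of `GL₂(𝔽_p)`. -/
def Cs : Subgroup (GL2 p) where
  carrier := {g | (g : Matrix (Fin 2) (Fin 2) (ZMod p)) 0 1 = 0 ∧
      (g : Matrix (Fin 2) (Fin 2) (ZMod p)) 1 0 = 0}
  one_mem' := by
    constructor <;>
    · show ((1 : GL2 p) : Matrix (Fin 2) (Fin 2) (ZMod p)) _ _ = 0
      simp [Matrix.one_apply]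
  mul_mem' := by
    intro a b ha hb
    simp only [Set.mem_setOf_eq] at ha hb ⊢
    constructor <;>
    · show ((a * b : GL2 p) : Matrix (Fin 2) (Fin 2) (ZMod p)) _ _ = 0
      rw [Units.val_mul, Matrix.mul_apply, Fin.sum_univ_two]
      simp [ha.1, ha.2, hb.1, hb.2]
  inv_mem' := by
    intro a ha
    simp only [Set.mem_setOf_eq] at ha ⊢
    constructor <;>
    · show ((a⁻¹ : GL2 p) : Matrix (Fin 2) (Fin 2) (ZMod p)) _ _ = 0
      rw [Matrix.coe_units_inv, Matrix.inv_def]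
      simp [Matrix.adjugate_fin_two, ha.1, ha.2]

/-- A (generalized) Cartan subgroup `{[[x, u*y],[y, x]]}` of `GL₂(𝔽_p)`;
for `u = λ` a non-square this is the nonsplit Cartan `C'`, for `u = 1` the split Cartan `C''`. -/
def Cgen (u : ZMod p) : Subgroup (GL2 p) where
  carrier := {g | (g : Matrix (Fin 2) (Fin 2) (ZMod p)) 0 0 =
      (g : Matrix (Fin 2) (Fin 2) (ZMod p)) 1 1 ∧
      (g : Matrix (Fin 2) (Fin 2) (ZMod p)) 0 1 =
      u * (g : Matrix (Fin 2) (Fin 2) (ZMod p)) 1 0}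
  one_mem' := by
    constructor <;> simp [Matrix.one_apply]
  mul_mem' := by
    intro a b ha hb
    simp only [Set.mem_setOf_eq] at ha hb ⊢
    obtain ⟨ha1, ha2⟩ := ha
    obtain ⟨hb1, hb2⟩ := hb
    constructor <;>
    · show ((a * b : GL2 p) : Matrix (Fin 2) (Fin 2) (ZMod p)) _ _ =
        _
      simp only [Units.val_mul, Matrix.mul_apply, Fin.sum_univ_two]
      rw [ha1, ha2, hb1, hb2]
      ring
  inv_mem' := by
    intro a ha
    simp only [Set.mem_setOf_eq] at ha ⊢
    obtain ⟨ha1, ha2⟩ := ha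
    constructor <;>
    · show ((a⁻¹ : GL2 p) : Matrix (Fin 2) (Fin 2) (ZMod p)) _ _ = _
      rw [Matrix.coe_units_inv, Matrix.inv_def]
      simp [Matrix.adjugate_fin_two, ha1, ha2]
      try ring

/-- `N`, the normalizer of the split (diagonal) Cartan subgroup. -/
def Nspl : Subgroup (GL2 p) := Subgroup.normalizer ((Cs p : Subgroup (GL2 p)) : Set (GL2 p))

/-- `N'`, the normalizer of the nonsplit Cartan subgroup (for `λ` a non-square). -/
def Nns (lam : ZMod p) : Subgroup (GL2 p) := Subgroup.normalizer ((Cgen p lam : Subgroup (GL2 p)) : Set (GL2 p))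

/-- `N''`, the normalizer of the split Cartan `C'' = {[[x,y],[y,x]]}`. -/
def Nspl' : Subgroup (GL2 p) := Subgroup.normalizer ((Cgen p 1 : Subgroup (GL2 p)) : Set (GL2 p))

/-- The double coset `N σ_t N` where `σ_t = [[1,1],[1,t]]`. -/
def dosetN (t : ZMod p) : Set (GL2 p) :=
  {g | ∃ a ∈ Nspl p, ∃ b ∈ Nspl p,
    ((a⁻¹ * g * b⁻¹ : GL2 p) : Matrix (Fin 2) (Fin 2) (ZMod p)) = !![1, 1; 1, t]}

/-- The double coset operator `ℝ[G/H] → ℝ[G/K]` (coefficients in `R`) attached to a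
left-`H`-invariant, right-`K`-invariant set `S ⊆ G`: the basis vector `xH` is sent to the
sum of the `K`-cosets contained in `x·S`. -/
def T (R : Type) [CommRing R] {G : Type} [Group G] [Fintype G] (H K : Subgroup G)
    (S : Set G) : ((G ⧸ H) → R) →ₗ[R] ((G ⧸ K) → R) where
  toFun v c := ∑ d : G ⧸ H,
    v d * (if c ∈ QuotientGroup.mk '' ((Quotient.out d) • S) then 1 else 0)
  map_add' := by
    intro u v
    funext c
    simp only [Pi.add_apply]
    rw [← Finset.sum_add_distrib]
    refine Finset.sum_congr rfl fun d _ => ?_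
    ring
  map_smul' := by
    intro a v
    funext c
    simp only [Pi.smul_apply, smul_eq_mul, RingHom.id_apply]
    rw [Finset.mul_sum]
    refine Finset.sum_congr rfl fun d _ => ?_
    ring

section Helpers
variable {p} [Fact p.Prime]

lemma two_ne (hodd : Odd p) : (2 : ZMod p) ≠ 0 := by
  have hp2 : p ≠ 2 := by rintro rfl; simp [Nat.odd_iff] at hodd
  intro h
  have h' : ((2 : ℕ) : ZMod p) = 0 := by exact_mod_cast h
  rw [ZMod.natCast_eq_zero_iff] at h'
  exact hp2 ((Nat.prime_dvd_prime_iff_eq (Fact.out) Nat.prime_two).mp h')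

lemma det_ne (h : GL2 p) : ((h : Matrix (Fin 2) (Fin 2) (ZMod p)).det) ≠ 0 :=
  (Matrix.isUnits_det_units h).ne_zero

lemma mem_Cs_iff (h : GL2 p) : h ∈ Cs p ↔
    (h : Matrix (Fin 2) (Fin 2) (ZMod p)) 0 1 = 0 ∧ (h : Matrix (Fin 2) (Fin 2) (ZMod p)) 1 0 = 0 :=
  Iff.rfl

lemma conj_val (a c : GL2 p) :
    ((a * c * a⁻¹ : GL2 p) : Matrix (Fin 2) (Fin 2) (ZMod p)) =
      ((a : Matrix (Fin 2) (Fin 2) (ZMod p)).det)⁻¹ •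
        ((a : Matrix (Fin 2) (Fin 2) (ZMod p)) * (c : Matrix (Fin 2) (Fin 2) (ZMod p)) *
          (a : Matrix (Fin 2) (Fin 2) (ZMod p)).adjugate) := by
  rw [Units.val_mul, Units.val_mul, Matrix.coe_units_inv, Matrix.inv_def, Ring.inverse_eq_inv',
    Matrix.mul_smul]

lemma coe_mk (A : Matrix (Fin 2) (Fin 2) (ZMod p)) (hA : A.det ≠ 0) :
    ((Matrix.GeneralLinearGroup.mkOfDetNeZero A hA : GL2 p) : Matrix (Fin 2) (Fin 2) (ZMod p)) = A := rfl

/-- "monomial" predicate -/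
def Mono (a : GL2 p) : Prop :=
  ((a : Matrix (Fin 2) (Fin 2) (ZMod p)) 0 1 = 0 ∧ (a : Matrix (Fin 2) (Fin 2) (ZMod p)) 1 0 = 0) ∨
  ((a : Matrix (Fin 2) (Fin 2) (ZMod p)) 0 0 = 0 ∧ (a : Matrix (Fin 2) (Fin 2) (ZMod p)) 1 1 = 0)

lemma inv_mono {a : GL2 p} (ha : Mono a) : Mono a⁻¹ := by
  have : ((a⁻¹ : GL2 p) : Matrix (Fin 2) (Fin 2) (ZMod p)) =
      ((a : Matrix (Fin 2) (Fin 2) (ZMod p)).det)⁻¹ •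
        (a : Matrix (Fin 2) (Fin 2) (ZMod p)).adjugate := by
    rw [Matrix.coe_units_inv, Matrix.inv_def, Ring.inverse_eq_inv']
  rcases ha with ⟨h1, h2⟩ | ⟨h1, h2⟩
  · left
    constructor <;> · rw [this]; simp [Matrix.adjugate_fin_two, h1, h2]
  · right
    constructor <;> · rw [this]; simp [Matrix.adjugate_fin_two, h1, h2]

lemma mono_conj {a : GL2 p} (ha : Mono a) {c : GL2 p} (hc : c ∈ Cs p) :
    a * c * a⁻¹ ∈ Cs p := by
  rw [mem_Cs_iff] at hc ⊢
  obtain ⟨hc1, hc2⟩ := hc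
  rw [conj_val]
  rcases ha with ⟨h1, h2⟩ | ⟨h1, h2⟩ <;>
  · constructor <;>
    · simp only [Matrix.smul_apply, smul_eq_mul, Matrix.mul_apply, Fin.sum_univ_two,
        Matrix.adjugate_fin_two, Matrix.cons_val', Matrix.cons_val_zero, Matrix.cons_val_one,
        Matrix.head_cons, Matrix.head_fin_const, Matrix.empty_val', Matrix.cons_val_fin_one]
      rw [h1, h2, hc1, hc2]; simp

lemma mem_Nspl_iff (hodd : Odd p) (h : GL2 p) : h ∈ Nspl p ↔ Mono h := by
  have hdet : (h : Matrix (Fin 2) (Fin 2) (ZMod p)).det ≠ 0 := det_ne h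
  have h2 : (2 : ZMod p) ≠ 0 := two_ne hodd
  have hdet' : (h : Matrix (Fin 2) (Fin 2) (ZMod p)) 0 0 * (h : Matrix (Fin 2) (Fin 2) (ZMod p)) 1 1
      - (h : Matrix (Fin 2) (Fin 2) (ZMod p)) 0 1 * (h : Matrix (Fin 2) (Fin 2) (ZMod p)) 1 0 ≠ 0 := by
    rwa [Matrix.det_fin_two] at hdet
  have hdi : ((h : Matrix (Fin 2) (Fin 2) (ZMod p)).det)⁻¹ ≠ 0 := inv_ne_zero hdet
  constructor
  · intro hmem
    have hD : (Matrix.GeneralLinearGroup.mkOfDetNeZero (!![1,0;0,2] : Matrix (Fin 2) (Fin 2) (ZMod p))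
        (by rw [Matrix.det_fin_two_of]; simpa using h2) : GL2 p) ∈ Cs p := by
      rw [mem_Cs_iff]; constructor <;> rfl
    have hE := ((Subgroup.mem_normalizer_iff.mp hmem) _).mp hD
    rw [mem_Cs_iff, conj_val] at hE
    obtain ⟨e1, e2⟩ := hE
    simp [Matrix.mul_apply, Fin.sum_univ_two, Matrix.adjugate_fin_two, coe_mk] at e1 e2
    have e1' := e1.resolve_left hdet
    have e2' := e2.resolve_left hdet
    have hab : (h : Matrix (Fin 2) (Fin 2) (ZMod p)) 0 0 * (h : Matrix (Fin 2) (Fin 2) (ZMod p)) 0 1 = 0 := by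
      linear_combination e1'
    have hcd : (h : Matrix (Fin 2) (Fin 2) (ZMod p)) 1 0 * (h : Matrix (Fin 2) (Fin 2) (ZMod p)) 1 1 = 0 := by
      linear_combination -e2'
    rcases mul_eq_zero.mp hab with ha | hb
    · right
      refine ⟨ha, ?_⟩
      rcases mul_eq_zero.mp hcd with hc | hd
      · exfalso; apply hdet'; rw [ha, hc]; ring
      · exact hd
    · left
      refine ⟨hb, ?_⟩
      rcases mul_eq_zero.mp hcd with hc | hd
      · exact hc
      · exfalso; apply hdet'; rw [hb, hd]; ring
  · intro hmono
    refine Subgroup.mem_normalizer_iff.mpr fun c => ?_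
    constructor
    · intro hc; exact mono_conj hmono hc
    · intro hc
      have := mono_conj (inv_mono hmono) hc
      simpa [mul_assoc] using this


def sigma0 : Matrix (Fin 2) (Fin 2) (ZMod p) := !![1, 1; 1, -1]

lemma mem_sigmaN_iff' (hodd : Odd p) (h : GL2 p)
    (S : Set (GL2 p))
    (hS : S = {h : GL2 p | ∃ n ∈ Nspl p, (h : Matrix (Fin 2) (Fin 2) (ZMod p)) = !![1, 1; 1, -1] * (n : Matrix (Fin 2) (Fin 2) (ZMod p))}) :
    h ∈ S ↔
    ((h : Matrix (Fin 2) (Fin 2) (ZMod p)) 0 0 = (h : Matrix (Fin 2) (Fin 2) (ZMod p)) 1 0 ∧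
     (h : Matrix (Fin 2) (Fin 2) (ZMod p)) 0 1 = -(h : Matrix (Fin 2) (Fin 2) (ZMod p)) 1 1) ∨
    ((h : Matrix (Fin 2) (Fin 2) (ZMod p)) 0 0 = -(h : Matrix (Fin 2) (Fin 2) (ZMod p)) 1 0 ∧
     (h : Matrix (Fin 2) (Fin 2) (ZMod p)) 0 1 = (h : Matrix (Fin 2) (Fin 2) (ZMod p)) 1 1) := by
  subst hS
  have hdet : (h : Matrix (Fin 2) (Fin 2) (ZMod p)).det ≠ 0 := det_ne h
  have hdet' : (h : Matrix (Fin 2) (Fin 2) (ZMod p)) 0 0 * (h : Matrix (Fin 2) (Fin 2) (ZMod p)) 1 1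
      - (h : Matrix (Fin 2) (Fin 2) (ZMod p)) 0 1 * (h : Matrix (Fin 2) (Fin 2) (ZMod p)) 1 0 ≠ 0 := by
    rwa [Matrix.det_fin_two] at hdet
  constructor
  · rintro ⟨m, hm, heq⟩
    rw [mem_Nspl_iff hodd] at hm
    have E := Matrix.ext_iff.mpr heq
    have E00 := E 0 0; have E01 := E 0 1; have E10 := E 1 0; have E11 := E 1 1
    simp [Matrix.mul_apply, Fin.sum_univ_two] at E00 E01 E10 E11
    rcases hm with ⟨m1, m2⟩ | ⟨m1, m2⟩
    · left
      constructor
      · rw [E00, E10, m2]; ring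
      · rw [E01, E11, m1]; ring
    · right
      constructor
      · rw [E00, E10, m1]; ring
      · rw [E01, E11, m2]; ring
  · intro hc
    rcases hc with ⟨e1, e2⟩ | ⟨e1, e2⟩
    · have hd : (!![(h : Matrix (Fin 2) (Fin 2) (ZMod p)) 0 0, 0; 0,
          (h : Matrix (Fin 2) (Fin 2) (ZMod p)) 0 1] : Matrix (Fin 2) (Fin 2) (ZMod p)).det ≠ 0 := by
        rw [Matrix.det_fin_two_of]
        intro hz
        apply hdet'
        rw [e1, e2] at hz ⊢
        linear_combination -2 * hz
      refine ⟨Matrix.GeneralLinearGroup.mkOfDetNeZero _ hd, ?_, ?_⟩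
      · rw [mem_Nspl_iff hodd]
        left
        constructor <;> simp [coe_mk]
      · rw [coe_mk]
        ext i j
        fin_cases i <;> fin_cases j <;>
          simp [Matrix.mul_apply, Fin.sum_univ_two] <;>
          first
          | rfl
          | linear_combination e1
          | linear_combination -e1
          | linear_combination e2
          | linear_combination -e2
          | ring
    · have hd : (!![0, (h : Matrix (Fin 2) (Fin 2) (ZMod p)) 0 1;
          (h : Matrix (Fin 2) (Fin 2) (ZMod p)) 0 0, 0] : Matrix (Fin 2) (Fin 2) (ZMod p)).det ≠ 0 := by
        rw [Matrix.det_fin_two_of]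
        intro hz
        apply hdet'
        rw [e1, e2] at hz ⊢
        linear_combination -2 * hz
      refine ⟨Matrix.GeneralLinearGroup.mkOfDetNeZero _ hd, ?_, ?_⟩
      · rw [mem_Nspl_iff hodd]
        right
        constructor <;> simp [coe_mk]
      · rw [coe_mk]
        ext i j
        fin_cases i <;> fin_cases j <;>
          simp [Matrix.mul_apply, Fin.sum_univ_two] <;>
          first
          | rfl
          | linear_combination e1
          | linear_combination -e1
          | linear_combination e2
          | linear_combination -e2
          | ring


/-- companion matrix unit -/
def compGL (t n : ZMod p) (hn : n ≠ 0) : GL2 p :=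
  Matrix.GeneralLinearGroup.mkOfDetNeZero !![0, -n; 1, t]
    (by rw [Matrix.det_fin_two_of]; simpa using hn)

lemma nonscalar_iff (g : GL2 p) :
    (¬ ∃ c : ZMod p, (g : Matrix (Fin 2) (Fin 2) (ZMod p)) = c • (1 : Matrix (Fin 2) (Fin 2) (ZMod p))) ↔
    ¬ ((g : Matrix (Fin 2) (Fin 2) (ZMod p)) 0 1 = 0 ∧ (g : Matrix (Fin 2) (Fin 2) (ZMod p)) 1 0 = 0 ∧
       (g : Matrix (Fin 2) (Fin 2) (ZMod p)) 0 0 = (g : Matrix (Fin 2) (Fin 2) (ZMod p)) 1 1) := by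
  constructor
  · rintro hg ⟨h1, h2, h3⟩
    exact hg ⟨(g : Matrix (Fin 2) (Fin 2) (ZMod p)) 0 0, by
      ext i j
      fin_cases i <;> fin_cases j <;> simp [Matrix.one_apply, h1, h2, h3]⟩
  · rintro hg ⟨c, hc⟩
    have E := Matrix.ext_iff.mpr hc
    have E00 := E 0 0; have E01 := E 0 1; have E10 := E 1 0; have E11 := E 1 1
    simp [Matrix.one_apply] at E00 E01 E10 E11
    exact hg ⟨E01, E10, by rw [E00, E11]⟩

lemma isConj_compGL (g : GL2 p)
    (hg : ¬ ∃ c : ZMod p, (g : Matrix (Fin 2) (Fin 2) (ZMod p)) = c • (1 : Matrix (Fin 2) (Fin 2) (ZMod p))) :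
    IsConj g (compGL ((g : Matrix (Fin 2) (Fin 2) (ZMod p)).trace)
      ((g : Matrix (Fin 2) (Fin 2) (ZMod p)).det) (det_ne g)) := by
  set M : Matrix (Fin 2) (Fin 2) (ZMod p) := (g : Matrix (Fin 2) (Fin 2) (ZMod p)) with hM
  have key : ∃ P : Matrix (Fin 2) (Fin 2) (ZMod p), P.det ≠ 0 ∧
      M * P = P * !![0, -M.det; 1, M.trace] := by
    by_cases c1 : M 1 0 ≠ 0
    · refine ⟨!![1, M 0 0; 0, M 1 0], by rw [Matrix.det_fin_two_of]; simpa using c1, ?_⟩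
      ext i j
      fin_cases i <;> fin_cases j <;>
        simp [Matrix.mul_apply, Fin.sum_univ_two, Matrix.det_fin_two, Matrix.trace_fin_two] <;> ring
    · push_neg at c1
      by_cases c2 : M 0 1 ≠ 0
      · refine ⟨!![0, M 0 1; 1, M 1 1], by rw [Matrix.det_fin_two_of]; simpa using c2, ?_⟩
        ext i j
        fin_cases i <;> fin_cases j <;>
          simp [Matrix.mul_apply, Fin.sum_univ_two, Matrix.det_fin_two, Matrix.trace_fin_two, c1] <;> ring
      · push_neg at c2
        have c3 : M 0 0 ≠ M 1 1 := by
          intro h3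
          exact (nonscalar_iff g).mp hg ⟨c2, c1, h3⟩
        refine ⟨!![1, M 0 0; 1, M 1 1], by rw [Matrix.det_fin_two_of]; simpa using (sub_ne_zero.mpr (Ne.symm c3)), ?_⟩
        ext i j
        fin_cases i <;> fin_cases j <;>
          simp [Matrix.mul_apply, Fin.sum_univ_two, Matrix.det_fin_two, Matrix.trace_fin_two, c1, c2] <;> ring
  obtain ⟨P, hP, hPC⟩ := key
  set Pu : GL2 p := Matrix.GeneralLinearGroup.mkOfDetNeZero P hP with hPu
  have hu : g * Pu = Pu * compGL M.trace M.det (det_ne g) := by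
    apply Units.ext
    rw [Units.val_mul, Units.val_mul]
    exact hPC
  rw [isConj_iff]
  refine ⟨Pu⁻¹, ?_⟩
  rw [inv_inv, mul_assoc, hu, ← mul_assoc, inv_mul_cancel, one_mul]

lemma isConj_of_eq (g h : GL2 p)
    (hg : ¬ ∃ c : ZMod p, (g : Matrix (Fin 2) (Fin 2) (ZMod p)) = c • (1 : Matrix (Fin 2) (Fin 2) (ZMod p)))
    (hh : ¬ ∃ c : ZMod p, (h : Matrix (Fin 2) (Fin 2) (ZMod p)) = c • (1 : Matrix (Fin 2) (Fin 2) (ZMod p)))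
    (htr : (h : Matrix (Fin 2) (Fin 2) (ZMod p)).trace = (g : Matrix (Fin 2) (Fin 2) (ZMod p)).trace)
    (hdet : (h : Matrix (Fin 2) (Fin 2) (ZMod p)).det = (g : Matrix (Fin 2) (Fin 2) (ZMod p)).det) :
    IsConj g h := by
  have h1 := isConj_compGL g hg
  have h2 := isConj_compGL h hh
  have : compGL ((h : Matrix (Fin 2) (Fin 2) (ZMod p)).trace) ((h : Matrix (Fin 2) (Fin 2) (ZMod p)).det) (det_ne h)
      = compGL ((g : Matrix (Fin 2) (Fin 2) (ZMod p)).trace) ((g : Matrix (Fin 2) (Fin 2) (ZMod p)).det) (det_ne g) := by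
    apply Units.ext
    show (!![0, -(h : Matrix (Fin 2) (Fin 2) (ZMod p)).det; 1, (h : Matrix (Fin 2) (Fin 2) (ZMod p)).trace] :
      Matrix (Fin 2) (Fin 2) (ZMod p)) = _
    rw [htr, hdet]
    rfl
  rw [this] at h2
  exact h1.trans h2.symm

lemma trace_det_of_isConj (g h : GL2 p) (hc : IsConj g h) :
    (h : Matrix (Fin 2) (Fin 2) (ZMod p)).trace = (g : Matrix (Fin 2) (Fin 2) (ZMod p)).trace ∧
    (h : Matrix (Fin 2) (Fin 2) (ZMod p)).det = (g : Matrix (Fin 2) (Fin 2) (ZMod p)).det := by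
  obtain ⟨c, hc⟩ := isConj_iff.mp hc
  subst hc
  constructor
  · rw [Units.val_mul, Units.val_mul]
    exact Matrix.trace_units_conj c _
  · rw [Units.val_mul, Units.val_mul, Matrix.coe_units_inv, Matrix.det_mul, Matrix.det_mul,
      Matrix.det_nonsing_inv]
    field_simp [Ring.inverse_eq_inv']
    rw [Ring.inverse_eq_inv', mul_comm (Matrix.det _) (Matrix.det _), mul_inv_cancel_right₀ (det_ne c)]


lemma ncard_S1 (hodd : Odd p) (t n : ZMod p) (hn : n ≠ 0) :
    {h : GL2 p | ((h : Matrix (Fin 2) (Fin 2) (ZMod p)) 0 0 = (h : Matrix (Fin 2) (Fin 2) (ZMod p)) 1 0 ∧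
      (h : Matrix (Fin 2) (Fin 2) (ZMod p)) 0 1 = -(h : Matrix (Fin 2) (Fin 2) (ZMod p)) 1 1) ∧
      (h : Matrix (Fin 2) (Fin 2) (ZMod p)).trace = t ∧
      (h : Matrix (Fin 2) (Fin 2) (ZMod p)).det = n}.ncard
    = {y : ZMod p | y ^ 2 = t ^ 2 - 2 * n}.ncard := by
  classical
  have h2 : (2 : ZMod p) ≠ 0 := two_ne hodd
  set S : Set (GL2 p) := {h : GL2 p | ((h : Matrix (Fin 2) (Fin 2) (ZMod p)) 0 0 = (h : Matrix (Fin 2) (Fin 2) (ZMod p)) 1 0 ∧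
      (h : Matrix (Fin 2) (Fin 2) (ZMod p)) 0 1 = -(h : Matrix (Fin 2) (Fin 2) (ZMod p)) 1 1) ∧
      (h : Matrix (Fin 2) (Fin 2) (ZMod p)).trace = t ∧
      (h : Matrix (Fin 2) (Fin 2) (ZMod p)).det = n} with hSdef
  set f : GL2 p → ZMod p := fun h => 2 * (h : Matrix (Fin 2) (Fin 2) (ZMod p)) 0 0 - t with hfdef
  have hinj : Set.InjOn f S := by
    rintro a ⟨⟨a1, a2⟩, atr, adet⟩ b ⟨⟨b1, b2⟩, btr, bdet⟩ hab
    simp only [hfdef] at hab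
    have h00 : (a : Matrix (Fin 2) (Fin 2) (ZMod p)) 0 0 = (b : Matrix (Fin 2) (Fin 2) (ZMod p)) 0 0 := by
      apply mul_left_cancel₀ h2
      linear_combination hab
    rw [Matrix.trace_fin_two] at atr btr
    have h11 : (a : Matrix (Fin 2) (Fin 2) (ZMod p)) 1 1 = (b : Matrix (Fin 2) (Fin 2) (ZMod p)) 1 1 := by
      linear_combination atr - btr - h00
    apply Units.ext
    ext i j
    fin_cases i <;> fin_cases j <;> simp only [Fin.zero_eta, Fin.mk_one, id_eq, Fin.isValue]
    · exact h00
    · rw [a2, b2, h11]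
    · rw [← a1, ← b1]; exact h00
    · exact h11
  have himg : f '' S = {y : ZMod p | y ^ 2 = t ^ 2 - 2 * n} := by
    apply Set.Subset.antisymm
    · rintro y ⟨h, ⟨⟨e1, e2⟩, etr, edet⟩, rfl⟩
      rw [Matrix.trace_fin_two] at etr
      rw [Matrix.det_fin_two] at edet
      simp only [hfdef, Set.mem_setOf_eq]
      linear_combination (4 * (h : Matrix (Fin 2) (Fin 2) (ZMod p)) 0 0) * etr - 2 * edet
        + (2 * (h : Matrix (Fin 2) (Fin 2) (ZMod p)) 0 1) * e1
        - (2 * (h : Matrix (Fin 2) (Fin 2) (ZMod p)) 0 0) * e2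
    · rintro y hy
      simp only [Set.mem_setOf_eq] at hy
      set a : ZMod p := (y + t) * 2⁻¹ with hadef
      have ha2 : 2 * a = y + t := by
        rw [hadef]; field_simp
      have hdetA : (!![a, a - t; a, t - a] : Matrix (Fin 2) (Fin 2) (ZMod p)).det = n := by
        rw [Matrix.det_fin_two_of]
        apply mul_left_cancel₀ h2
        apply mul_left_cancel₀ h2
        linear_combination (-2*(2*a - t + y)) * ha2 - 2*hy
      refine ⟨Matrix.GeneralLinearGroup.mkOfDetNeZero !![a, a - t; a, t - a]
        (by rw [hdetA]; exact hn), ⟨⟨?_, ?_⟩, ?_, ?_⟩, ?_⟩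
      · rw [coe_mk]; simp
      · rw [coe_mk]; simp
      · rw [coe_mk, Matrix.trace_fin_two_of]; ring
      · rw [coe_mk]; exact hdetA
      · simp only [hfdef, coe_mk]
        show 2 * a - t = y
        linear_combination ha2
  rw [← himg, Set.ncard_image_of_injOn hinj]


lemma ncard_S2 (hodd : Odd p) (t n : ZMod p) (hn : n ≠ 0) :
    {h : GL2 p | ((h : Matrix (Fin 2) (Fin 2) (ZMod p)) 0 0 = -(h : Matrix (Fin 2) (Fin 2) (ZMod p)) 1 0 ∧
      (h : Matrix (Fin 2) (Fin 2) (ZMod p)) 0 1 = (h : Matrix (Fin 2) (Fin 2) (ZMod p)) 1 1) ∧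
      (h : Matrix (Fin 2) (Fin 2) (ZMod p)).trace = t ∧
      (h : Matrix (Fin 2) (Fin 2) (ZMod p)).det = n}.ncard
    = {y : ZMod p | y ^ 2 = t ^ 2 - 2 * n}.ncard := by
  classical
  have h2 : (2 : ZMod p) ≠ 0 := two_ne hodd
  set S : Set (GL2 p) := {h : GL2 p | ((h : Matrix (Fin 2) (Fin 2) (ZMod p)) 0 0 = -(h : Matrix (Fin 2) (Fin 2) (ZMod p)) 1 0 ∧
      (h : Matrix (Fin 2) (Fin 2) (ZMod p)) 0 1 = (h : Matrix (Fin 2) (Fin 2) (ZMod p)) 1 1) ∧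
      (h : Matrix (Fin 2) (Fin 2) (ZMod p)).trace = t ∧
      (h : Matrix (Fin 2) (Fin 2) (ZMod p)).det = n} with hSdef
  set f : GL2 p → ZMod p := fun h => 2 * (h : Matrix (Fin 2) (Fin 2) (ZMod p)) 0 0 - t with hfdef
  have hinj : Set.InjOn f S := by
    rintro a ⟨⟨a1, a2⟩, atr, adet⟩ b ⟨⟨b1, b2⟩, btr, bdet⟩ hab
    simp only [hfdef] at hab
    have h00 : (a : Matrix (Fin 2) (Fin 2) (ZMod p)) 0 0 = (b : Matrix (Fin 2) (Fin 2) (ZMod p)) 0 0 := by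
      apply mul_left_cancel₀ h2
      linear_combination hab
    rw [Matrix.trace_fin_two] at atr btr
    have h11 : (a : Matrix (Fin 2) (Fin 2) (ZMod p)) 1 1 = (b : Matrix (Fin 2) (Fin 2) (ZMod p)) 1 1 := by
      linear_combination atr - btr - h00
    apply Units.ext
    ext i j
    fin_cases i <;> fin_cases j <;> simp only [Fin.zero_eta, Fin.mk_one, id_eq, Fin.isValue]
    · exact h00
    · rw [a2, b2, h11]
    · linear_combination a1 - b1 - h00
    · exact h11
  have himg : f '' S = {y : ZMod p | y ^ 2 = t ^ 2 - 2 * n} := by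
    apply Set.Subset.antisymm
    · rintro y ⟨h, ⟨⟨e1, e2⟩, etr, edet⟩, rfl⟩
      rw [Matrix.trace_fin_two] at etr
      rw [Matrix.det_fin_two] at edet
      simp only [hfdef, Set.mem_setOf_eq]
      linear_combination (4 * (h : Matrix (Fin 2) (Fin 2) (ZMod p)) 0 0) * etr - 2 * edet
        - (2 * (h : Matrix (Fin 2) (Fin 2) (ZMod p)) 0 1) * e1
        + (2 * (h : Matrix (Fin 2) (Fin 2) (ZMod p)) 0 0) * e2
    · rintro y hy
      simp only [Set.mem_setOf_eq] at hy
      set a : ZMod p := (y + t) * 2⁻¹ with hadef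
      have ha2 : 2 * a = y + t := by
        rw [hadef]; field_simp
      have hdetA : (!![a, t - a; -a, t - a] : Matrix (Fin 2) (Fin 2) (ZMod p)).det = n := by
        rw [Matrix.det_fin_two_of]
        apply mul_left_cancel₀ h2
        apply mul_left_cancel₀ h2
        linear_combination (-2*(2*a - t + y)) * ha2 - 2*hy
      refine ⟨Matrix.GeneralLinearGroup.mkOfDetNeZero !![a, t - a; -a, t - a]
        (by rw [hdetA]; exact hn), ⟨⟨?_, ?_⟩, ?_, ?_⟩, ?_⟩
      · rw [coe_mk]; simp
      · rw [coe_mk]; simp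
      · rw [coe_mk, Matrix.trace_fin_two_of]; ring
      · rw [coe_mk]; exact hdetA
      · simp only [hfdef, coe_mk]
        show 2 * a - t = y
        linear_combination ha2
  rw [← himg, Set.ncard_image_of_injOn hinj]

lemma shape_nonscalar (h : GL2 p)
    (hs : ((h : Matrix (Fin 2) (Fin 2) (ZMod p)) 0 0 = (h : Matrix (Fin 2) (Fin 2) (ZMod p)) 1 0 ∧
      (h : Matrix (Fin 2) (Fin 2) (ZMod p)) 0 1 = -(h : Matrix (Fin 2) (Fin 2) (ZMod p)) 1 1) ∨
      ((h : Matrix (Fin 2) (Fin 2) (ZMod p)) 0 0 = -(h : Matrix (Fin 2) (Fin 2) (ZMod p)) 1 0 ∧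
      (h : Matrix (Fin 2) (Fin 2) (ZMod p)) 0 1 = (h : Matrix (Fin 2) (Fin 2) (ZMod p)) 1 1)) :
    ¬ ∃ c : ZMod p, (h : Matrix (Fin 2) (Fin 2) (ZMod p)) = c • (1 : Matrix (Fin 2) (Fin 2) (ZMod p)) := by
  rw [nonscalar_iff]
  rintro ⟨z1, z2, z3⟩
  apply det_ne h
  rw [Matrix.det_fin_two]
  rcases hs with ⟨e1, e2⟩ | ⟨e1, e2⟩ <;> rw [e1, z2, z1] <;> ring


end Helpers

end Chen

open Chen in
/-- The coset `σ₋₁N ⊆ GL₂(𝔽_p)` where `σ₋₁ = [[1,1],[1,−1]]`. -/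
def sigmaN (p : ℕ) : Set (GL2 p) :=
  {h | ∃ n ∈ Nspl p, (h : Matrix (Fin 2) (Fin 2) (ZMod p)) = !![1, 1; 1, -1] * (n : Matrix (Fin 2) (Fin 2) (ZMod p))}

open Chen in
/-- **Lemma 9.2.** For a non-scalar `g ∈ GL₂(𝔽_p)` with trace `t` and determinant `n`, the number
of elements of `σ₋₁N` conjugate to `g` equals `2(1 + ((t² − 2n)/p))`, with `(·/p)` the Legendre
symbol (vanishing at `0`). -/
theorem card_sigmaN_conj (p : ℕ) [Fact p.Prime] (hodd : Odd p) (g : GL2 p)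
    (hg : ¬ ∃ c : ZMod p, (g : Matrix (Fin 2) (Fin 2) (ZMod p)) = c • (1 : Matrix (Fin 2) (Fin 2) (ZMod p))) :
    (Nat.card {h : GL2 p // h ∈ sigmaN p ∧ IsConj g h} : ℤ) =
      2 * (1 + quadraticChar (ZMod p)
        ((Matrix.trace (g : Matrix (Fin 2) (Fin 2) (ZMod p))) ^ 2 - 2 * (g : Matrix (Fin 2) (Fin 2) (ZMod p)).det)) := by
  classical
  have h2 : (2 : ZMod p) ≠ 0 := two_ne hodd
  have hn : (g : Matrix (Fin 2) (Fin 2) (ZMod p)).det ≠ 0 := det_ne g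
  set t := Matrix.trace (g : Matrix (Fin 2) (Fin 2) (ZMod p)) with htdef
  set n := (g : Matrix (Fin 2) (Fin 2) (ZMod p)).det with hndef
  set S1 : Set (GL2 p) := {h : GL2 p | ((h : Matrix (Fin 2) (Fin 2) (ZMod p)) 0 0 = (h : Matrix (Fin 2) (Fin 2) (ZMod p)) 1 0 ∧
      (h : Matrix (Fin 2) (Fin 2) (ZMod p)) 0 1 = -(h : Matrix (Fin 2) (Fin 2) (ZMod p)) 1 1) ∧
      (h : Matrix (Fin 2) (Fin 2) (ZMod p)).trace = t ∧
      (h : Matrix (Fin 2) (Fin 2) (ZMod p)).det = n} with hS1def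
  set S2 : Set (GL2 p) := {h : GL2 p | ((h : Matrix (Fin 2) (Fin 2) (ZMod p)) 0 0 = -(h : Matrix (Fin 2) (Fin 2) (ZMod p)) 1 0 ∧
      (h : Matrix (Fin 2) (Fin 2) (ZMod p)) 0 1 = (h : Matrix (Fin 2) (Fin 2) (ZMod p)) 1 1) ∧
      (h : Matrix (Fin 2) (Fin 2) (ZMod p)).trace = t ∧
      (h : Matrix (Fin 2) (Fin 2) (ZMod p)).det = n} with hS2def
  have hunion : ∀ h : GL2 p, (h ∈ sigmaN p ∧ IsConj g h) ↔ (h ∈ S1 ∨ h ∈ S2) := by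
    intro h
    rw [mem_sigmaN_iff' hodd h (sigmaN p) rfl]
    constructor
    · rintro ⟨hs, hc⟩
      obtain ⟨htr, hdt⟩ := trace_det_of_isConj g h hc
      rcases hs with h1 | h1
      · exact Or.inl ⟨h1, htr, hdt⟩
      · exact Or.inr ⟨h1, htr, hdt⟩
    · rintro (⟨h1, htr, hdt⟩ | ⟨h1, htr, hdt⟩)
      exacts [⟨Or.inl h1, isConj_of_eq g h hg (shape_nonscalar h (Or.inl h1)) htr hdt⟩,
        ⟨Or.inr h1, isConj_of_eq g h hg (shape_nonscalar h (Or.inr h1)) htr hdt⟩]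
  have hdisj : Disjoint S1 S2 := by
    rw [Set.disjoint_left]
    rintro h ⟨⟨a1, a2⟩, htr, hdt⟩ ⟨⟨b1, b2⟩, _, _⟩
    have e10 : (h : Matrix (Fin 2) (Fin 2) (ZMod p)) 1 0 = 0 := by
      have e := a1.symm.trans b1
      have e' : (2 : ZMod p) * (h : Matrix (Fin 2) (Fin 2) (ZMod p)) 1 0 = 0 := by
        linear_combination e
      exact (mul_eq_zero.mp e').resolve_left h2
    apply hn
    rw [← hdt, Matrix.det_fin_two, a1, e10]
    ring
  have hcount : Nat.card {h : GL2 p // h ∈ sigmaN p ∧ IsConj g h} = S1.ncard + S2.ncard := by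
    have hc1 : Nat.card {h : GL2 p // h ∈ sigmaN p ∧ IsConj g h} = (S1 ∪ S2).ncard := by
      rw [← Nat.card_coe_set_eq]
      exact Nat.card_congr (Equiv.subtypeEquivRight fun h => by rw [hunion h, Set.mem_union])
    rw [hc1, Set.ncard_union_eq hdisj (Set.toFinite _) (Set.toFinite _)]
  have hq1 := ncard_S1 (p := p) hodd t n hn
  have hq2 := ncard_S2 (p := p) hodd t n hn
  have hF : ringChar (ZMod p) ≠ 2 := by
    rw [ZMod.ringChar_zmod_n]; rintro rfl; simp [Nat.odd_iff] at hodd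
  have hQ : ({y : ZMod p | y ^ 2 = t ^ 2 - 2 * n}.ncard : ℤ) =
      quadraticChar (ZMod p) (t ^ 2 - 2 * n) + 1 := by
    have hqc := quadraticChar_card_sqrts hF (t ^ 2 - 2 * n)
    rw [Set.ncard_eq_toFinset_card']
    convert hqc using 2
  rw [hcount, hq1, hq2]
  push_cast
  rw [hQ]
  ring
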